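/- arXiv:2309.03123 — 9 statements merged into one kernel-verified Lean document; each statement's English description precedes it below -/
import Mathlib

section
/- A monotonic and unanimous social choice function is strategy-proof. -/
/-- `f p = a` remains `a` whenever `a`'s position weakly improves for every agent. -/
def Monotonic {A : Type*} {N : ℕ} (f : (Fin N → LinearOrder A) → A) : Prop :=
  ∀ (p q : Fin N → LinearOrder A) (a : A), f p = a →
    (∀ (i : Fin N) (b : A), (p i).lt b a → (q i).lt b a) → f q = a

/-- If every agent top-ranks `a`, then `f` outputs `a`. -/
def Unanimous {A : Type*} {N : ℕ} (f : (Fin N → LinearOrder A) → A) : Prop :=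
  ∀ (p : Fin N → LinearOrder A) (a : A), (∀ (i : Fin N) (b : A), b ≠ a → (p i).lt b a) →
    f p = a

/-- No agent can obtain a strictly preferred outcome by a unilateral deviation. -/
def StrategyProof {A : Type*} {N : ℕ} (f : (Fin N → LinearOrder A) → A) : Prop :=
  ∀ (i : Fin N) (p q : Fin N → LinearOrder A), (∀ j : Fin N, j ≠ i → q j = p j) →
    ((p i).lt (f q) (f p) ∨ f p = f q)

theorem monotonic_unanimous_implies_strategyProof
    {A : Type*} [Fintype A] {N : ℕ} (hN : 1 ≤ N)
    (f : (Fin N → LinearOrder A) → A)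
    (hmono : Monotonic f) (hunan : Unanimous f) :
    StrategyProof f := by
  classical
  intro i p q hqp
  by_contra h
  push_neg at h
  obtain ⟨h1, h2⟩ := h
  set x := f p with hx
  set y := f q with hy
  have hxy : (p i).lt x y := by
    letI := p i
    rcases lt_trichotomy x y with h | h | h
    · exact h
    · exact absurd h h2
    · exact absurd h (not_lt.mpr h1)
  have hxney : x ≠ y := h2
  -- rank function: y on top, x second, rest anywhere below
  let n : ℕ := Fintype.card A
  let e : A ≃ Fin n := Fintype.equivFin A
  let g : A → ℕ := fun a => if a = y then n + 1 else if a = x then n else (e a : ℕ)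
  have glt : ∀ a : A, a ≠ x → a ≠ y → g a < n := by
    intro a hax hay
    simp only [g, if_neg hay, if_neg hax]
    exact (e a).isLt
  have gx : g x = n := by simp [g, hxney]
  have gy : g y = n + 1 := by simp [g]
  have ginj : Function.Injective g := by
    intro a b hab
    by_cases hay : a = y <;> by_cases hby : b = y
    · rw [hay, hby]
    · exfalso; subst hay
      rcases eq_or_ne b x with hbx | hbx
      · subst hbx; rw [gy, gx] at hab; omega
      · have := glt b hbx hby; rw [gy] at hab; omega
    · exfalso; subst hby
      rcases eq_or_ne a x with hax | hax
      · subst hax; rw [gy, gx] at hab; omega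
      · have := glt a hax hay; rw [gy] at hab; omega
    · by_cases hax : a = x <;> by_cases hbx : b = x
      · rw [hax, hbx]
      · exfalso; subst hax; have := glt b hbx hby; rw [gx] at hab; omega
      · exfalso; subst hbx; have := glt a hax hay; rw [gx] at hab; omega
      · have : (e a : ℕ) = (e b : ℕ) := by
          simpa only [g, if_neg hay, if_neg hax, if_neg hby, if_neg hbx] using hab
        exact e.injective (Fin.val_injective this)
  let Li : LinearOrder A := LinearOrder.lift' g ginj
  have hlt : ∀ a b : A, Li.lt a b ↔ g a < g b := fun a b => Iff.rfl
  let r : Fin N → LinearOrder A := Function.update p i Li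
  have hri : r i = Li := Function.update_self i Li p
  have hrj : ∀ j, j ≠ i → r j = p j := fun j hj => Function.update_of_ne hj Li p
  -- in r i, y is top
  have htop : ∀ b : A, b ≠ y → Li.lt b y := by
    intro b hb
    rw [hlt, gy]
    rcases eq_or_ne b x with hbx | hbx
    · subst hbx; rw [gx]; omega
    · have := glt b hbx hb; omega
  -- in r i, x is second
  have hsecond : ∀ b : A, b ≠ x → b ≠ y → Li.lt b x := by
    intro b hbx hby
    rw [hlt, gx]
    exact glt b hbx hby
  -- f r = y by monotonicity from q
  have hfry : f r = y := by
    apply hmono q r y rfl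
    intro j b hb
    by_cases hj : j = i
    · subst hj
      rw [hri]
      apply htop
      intro hbe
      subst hbe
      exact absurd hb (by letI := q j; exact lt_irrefl _)
    · rw [hrj j hj, ← hqp j hj]; exact hb
  -- f r = x by monotonicity from p
  have hfrx : f r = x := by
    apply hmono p r x rfl
    intro j b hb
    by_cases hj : j = i
    · subst hj
      rw [hri]
      apply hsecond
      · intro hbe; subst hbe
        exact absurd hb (by letI := p j; exact lt_irrefl _)
      · intro hbe; subst hbe
        letI := p j
        exact absurd (lt_trans hb hxy) (lt_irrefl _)
    · rw [hrj j hj]; exact hb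
  exact hxney (hfrx ▸ hfry)
end

section
/- A strategy-proof social choice function is monotonic. -/
theorem strategyProof_implies_monotonic
    {A : Type*} [Fintype A] {N : ℕ} (hN : 1 ≤ N)
    (f : (Fin N → LinearOrder A) → A)
    (hsp : StrategyProof f) :
    Monotonic f := by
  intro p q a hfa hmono
  set hyb : ℕ → Fin N → LinearOrder A := fun k i => if (i : ℕ) < k then q i else p i with hhyb
  have key : ∀ k, f (hyb k) = a := by
    intro k
    induction k with
    | zero =>
      have h0 : hyb 0 = p := by funext i; simp [hhyb]
      rwa [h0]
    | succ k ih =>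
      by_cases hk : k < N
      · set i₀ : Fin N := ⟨k, hk⟩ with hi₀
        have hdiff : ∀ j : Fin N, j ≠ i₀ → hyb (k+1) j = hyb k j := by
          intro j hj
          have hjk : (j : ℕ) ≠ k := fun h => hj (Fin.ext h)
          simp only [hhyb]
          rcases Nat.lt_or_ge (j : ℕ) k with h | h
          · rw [if_pos h, if_pos (Nat.lt_succ_of_lt h)]
          · have h' : ¬ (j : ℕ) < k := not_lt.mpr h
            have h'' : ¬ (j : ℕ) < k + 1 := by omega
            rw [if_neg h', if_neg h'']
        have hdiff' : ∀ j : Fin N, j ≠ i₀ → hyb k j = hyb (k+1) j :=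
          fun j hj => (hdiff j hj).symm
        have hki : hyb k i₀ = p i₀ := by simp [hhyb, hi₀]
        have hk1i : hyb (k+1) i₀ = q i₀ := by simp [hhyb, hi₀]
        have h1 := hsp i₀ (hyb k) (hyb (k+1)) hdiff
        have h2 := hsp i₀ (hyb (k+1)) (hyb k) hdiff'
        rcases h2 with h2 | h2
        · rw [ih, hk1i] at h2
          rcases h1 with h1 | h1
          · rw [ih, hki] at h1
            have hqlt := hmono i₀ _ h1
            exfalso
            letI := q i₀
            exact lt_asymm h2 hqlt
          · rw [← h1, ih]
        · rw [h2, ih]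
      · have heq : hyb (k+1) = hyb k := by
          funext i
          have hi : (i : ℕ) < k := lt_of_lt_of_le i.isLt (le_of_not_gt hk)
          simp [hhyb, hi, Nat.lt_succ_of_lt hi]
        rw [heq, ih]
  have hq : hyb N = q := by funext i; simp [hhyb, i.isLt]
  rw [← hq, key N]
end

section
/- A strategy-proof and surjective social choice function is unanimous. -/
theorem strategyProof_surjective_implies_unanimous
    {A : Type*} [Fintype A] {N : ℕ} (hN : 1 ≤ N)
    (f : (Fin N → LinearOrder A) → A)
    (hsp : StrategyProof f) (hsurj : Function.Surjective f) :
    Unanimous f := by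
  intro u a hu
  obtain ⟨p0, hp0⟩ := hsurj a
  set h : ℕ → Fin N → LinearOrder A := fun k j => if j.val < k then u j else p0 j with hh
  have key : ∀ k, k ≤ N → f (h k) = a := by
    intro k
    induction k with
    | zero =>
      intro _
      have : h 0 = p0 := by funext j; simp [hh]
      rw [this, hp0]
    | succ k ih =>
      intro hk1
      have hk : k < N := hk1
      have ihk := ih (le_of_lt hk)
      have agree : ∀ j : Fin N, j ≠ ⟨k, hk⟩ → h k j = h (k+1) j := by
        intro j hj
        have hjk : (j : ℕ) ≠ k := fun hjk => hj (Fin.ext hjk)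
        simp only [hh]
        rcases Nat.lt_or_ge j.val k with h1 | h1
        · simp [h1, Nat.lt_succ_of_lt h1]
        · have h2 : ¬ j.val < k := not_lt.mpr h1
          have h3 : ¬ j.val < k + 1 := by omega
          simp [h2, h3]
      rcases hsp ⟨k, hk⟩ (h (k+1)) (h k) agree with hlt | heq
      · exfalso
        have hi : h (k+1) ⟨k, hk⟩ = u ⟨k, hk⟩ := by simp [hh]
        rw [hi, ihk] at hlt
        letI := u ⟨k, hk⟩
        by_cases hx : f (h (k+1)) = a
        · rw [hx] at hlt; exact lt_irrefl a hlt
        · exact lt_asymm hlt (hu ⟨k, hk⟩ _ hx)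
      · rw [heq]; exact ihk
  have hN' : h N = u := by
    funext j; simp [hh, j.isLt]
  have := key N le_rfl
  rwa [hN'] at this
end

section
/- A social choice function is monotonic and unanimous if and only if it is surjective and strategy-proof. -/
/-- A linear order on `A` ranking by `g` first (larger `g` is higher), breaking ties
by an arbitrary fixed enumeration. -/
noncomputable def mkOrd {A : Type*} [Fintype A] (g : A → ℕ) : LinearOrder A :=
  LinearOrder.lift' (fun x => toLex (g x, Fintype.equivFin A x))
    (fun x y h => (Fintype.equivFin A).injective
      (congrArg (fun z : ℕ ×ₗ Fin (Fintype.card A) => (ofLex z).2) h))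

theorem mkOrd_lt {A : Type*} [Fintype A] (g : A → ℕ) {x y : A} (h : g x < g y) :
    (mkOrd g).lt x y := by
  show toLex (g x, Fintype.equivFin A x) < toLex (g y, Fintype.equivFin A y)
  rw [Prod.Lex.lt_iff]
  exact Or.inl h

theorem monotonic_unanimous_iff_surjective_strategyProof
    {A : Type*} [Fintype A] {N : ℕ} (hN : 1 ≤ N)
    (f : (Fin N → LinearOrder A) → A) :
    (Monotonic f ∧ Unanimous f) ↔ (Function.Surjective f ∧ StrategyProof f) := by
  classical
  constructor
  · rintro ⟨hmono, hunan⟩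
    constructor
    · intro a
      refine ⟨fun _ => mkOrd (fun x => if x = a then 1 else 0), hunan _ a ?_⟩
      intro i b hb
      exact mkOrd_lt _ (by simp [hb])
    · intro i p q hqj
      by_contra h
      push_neg at h
      obtain ⟨h1, h2⟩ := h
      set a := f p with ha
      set b := f q with hb
      have hab : (p i).lt a b := by
        letI := p i
        rcases lt_trichotomy a b with h | h | h
        · exact h
        · exact absurd h h2
        · exact absurd h (not_lt.mpr h1)
      set L : LinearOrder A := mkOrd (fun x => if x = b then 2 else if x = a then 1 else 0)
        with hL
      set q' : Fin N → LinearOrder A := Function.update q i L with hq'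
      have hne : a ≠ b := h2
      have hb' : f q' = b := by
        refine hmono q q' b hb.symm ?_
        intro j c hc
        by_cases hj : j = i
        · subst hj
          have hcb : c ≠ b := by
            intro hcb; subst hcb; letI := q j; exact lt_irrefl _ hc
          rw [hq', Function.update_self]
          exact mkOrd_lt _ (by simp only [if_pos rfl, if_neg hcb]; split_ifs <;> omega)
        · rw [hq', Function.update_of_ne hj]; exact hc
      have ha' : f q' = a := by
        refine hmono p q' a rfl ?_
        intro j c hc
        by_cases hj : j = i
        · subst hj
          have hca : c ≠ a := by
            intro hca; subst hca; letI := p j; exact lt_irrefl _ hc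
          have hcb : c ≠ b := by
            intro hcb; subst hcb; letI := p j; exact lt_asymm hc hab
          rw [hq', Function.update_self]
          exact mkOrd_lt _ (by simp [hca, hcb, hne])
        · rw [hq', Function.update_of_ne hj, hqj j hj]; exact hc
      exact hne (ha' ▸ hb')
  · rintro ⟨hsurj, hsp⟩
    have hmono : Monotonic f := by
      intro p q a hpa hcond
      set r : ℕ → (Fin N → LinearOrder A) := fun k j => if (j : ℕ) < k then q j else p j
        with hr
      have key : ∀ k, f (r k) = a := by
        intro k
        induction k with
        | zero =>
          have : r 0 = p := by funext j; simp [hr]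
          rw [this]; exact hpa
        | succ k ih =>
          by_cases hk : k < N
          · set i : Fin N := ⟨k, hk⟩ with hi
            have hdiff : ∀ j : Fin N, j ≠ i → r (k + 1) j = r k j := by
              intro j hj
              have hjk : (j : ℕ) ≠ k := fun hc => hj (Fin.ext hc)
              simp only [hr]
              by_cases h' : (j : ℕ) < k
              · rw [if_pos (Nat.lt_succ_of_lt h'), if_pos h']
              · rw [if_neg h', if_neg (by omega)]
            have hrki : r k i = p i := by simp [hr, hi]
            have hrk1i : r (k + 1) i = q i := by simp [hr, hi]
            rcases hsp i (r k) (r (k + 1)) hdiff with hlt | heq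
            · rw [ih, hrki] at hlt
              have hlt' : (q i).lt (f (r (k + 1))) a := hcond i _ hlt
              rcases hsp i (r (k + 1)) (r k) (fun j hj => (hdiff j hj).symm) with hlt2 | heq2
              · rw [ih, hrk1i] at hlt2
                letI := q i
                exact absurd hlt2 (lt_asymm hlt')
              · exact heq2.trans ih
            · exact heq.symm.trans ih
          · have : r (k + 1) = r k := by
              funext j
              have : (j : ℕ) < k := lt_of_lt_of_le j.isLt (by omega)
              simp [hr, this, Nat.lt_succ_of_lt this]
            rw [this, ih]
      have hrN : r N = q := by
        funext j; simp [hr, j.isLt]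
      rw [← hrN]; exact key N
    refine ⟨hmono, ?_⟩
    intro p a htop
    obtain ⟨p0, hp0⟩ := hsurj a
    refine hmono p0 p a hp0 ?_
    intro i b hb
    have hba : b ≠ a := by
      intro h; subst h; letI := p0 i; exact lt_irrefl _ hb
    exact htop i b hba
end

section
/- If f is a monotonic and unanimous social choice function, |A| ≥ 3, and all agents rank alternatives a_i and a_j above all other alternatives in a profile, then the outcome of f at that profile is either a_i or a_j. -/
open Classical in
/-- A linear order putting `ai` on top and `c` second. -/
noncomputable def topTwoOrder {A : Type*} [Fintype A] (ai c : A) : LinearOrder A :=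
  LinearOrder.lift'
    (fun x => toLex (((if x = ai then 2 else if x = c then 1 else 0 : ℕ),
      Fintype.equivFin A x)))
    (fun x y h => by
      have h2 := congrArg (fun z => (ofLex z).2) h
      simpa using (Fintype.equivFin A).injective h2)

open Classical in
lemma topTwoOrder_lt {A : Type*} [Fintype A] (ai c : A) (x y : A) :
    (topTwoOrder ai c).lt x y ↔
      toLex (((if x = ai then 2 else if x = c then 1 else 0 : ℕ), Fintype.equivFin A x))
      < toLex (((if y = ai then 2 else if y = c then 1 else 0 : ℕ), Fintype.equivFin A y)) := by
  rfl

theorem top_two_outcome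
    {A : Type*} [Fintype A] (hA : 3 ≤ Fintype.card A) {N : ℕ} (hN : 1 ≤ N)
    (f : (Fin N → LinearOrder A) → A)
    (hmono : Monotonic f) (hunan : Unanimous f)
    (ai aj : A) (hij : ai ≠ aj)
    (p : Fin N → LinearOrder A)
    (htop : ∀ (l : Fin N) (b : A), b ≠ ai → b ≠ aj →
      (p l).lt b ai ∧ (p l).lt b aj) :
    f p = ai ∨ f p = aj := by
  classical
  by_contra h
  push_neg at h
  obtain ⟨h1, h2⟩ := h
  set c := f p with hc
  let q : Fin N → LinearOrder A := fun _ => topTwoOrder ai c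
  have hcai : ∀ l : Fin N, (p l).lt c ai := fun l => (htop l c h1 h2).1
  have hcaj : ∀ l : Fin N, (p l).lt c aj := fun l => (htop l c h1 h2).2
  have hfq : f q = c := by
    apply hmono p q c rfl
    intro l b hb
    have hbai : b ≠ ai := by
      rintro rfl
      exact @lt_asymm A (p l).toPreorder _ _ hb (hcai l)
    have hbaj : b ≠ aj := by
      rintro rfl
      exact @lt_asymm A (p l).toPreorder _ _ hb (hcaj l)
    have hbc : b ≠ c := by
      rintro rfl
      exact @lt_irrefl A (p l).toPreorder _ hb
    show (topTwoOrder ai c).lt b c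
    rw [topTwoOrder_lt]
    apply Prod.Lex.left
    simp [hbai, hbaj, hbc, h1]
  have hfq' : f q = ai := by
    apply hunan
    intro l b hb
    show (topTwoOrder ai c).lt b ai
    rw [topTwoOrder_lt]
    apply Prod.Lex.left
    rw [if_pos rfl, if_neg hb]
    split <;> omega
  exact h1 (hfq.symm.trans hfq')
end

section
/- Let f be a monotonic and unanimous social choice function and fix alternatives a_i ≠ a_j and a sign vector σ ∈ {+,−}^N. Define U_{ij}^σ as the set of profiles where agent l ranks a_i above a_j if σ_l = + and a_j above a_i if σ_l = −. Then either f(U_{ij}^σ) ⊆ A \ {a_i} or f(U_{ij}^σ) ⊆ A \ {a_j}. -/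
open Classical

/-- Ranking function placing `a` on top and `b` second. -/
noncomputable def rkTT {A : Type*} [Fintype A] (a b : A) (x : A) : ℕ :=
  if x = a then Fintype.card A + 1 else if x = b then Fintype.card A
  else (Fintype.equivFin A x : ℕ)

lemma rkTT_inj {A : Type*} [Fintype A] (a b : A) : Function.Injective (rkTT a b) := by
  intro x y h
  have hx := (Fintype.equivFin A x).isLt
  have hy := (Fintype.equivFin A y).isLt
  unfold rkTT at h
  split_ifs at h <;>
    first
      | (subst_vars; rfl)
      | omega
      | (exact (Fintype.equivFin A).injective (Fin.ext h))

/-- Linear order with `a` on top and `b` second. -/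
noncomputable def topTwo {A : Type*} [Fintype A] (a b : A) : LinearOrder A :=
  LinearOrder.lift' (rkTT a b) (rkTT_inj a b)

lemma topTwo_lt {A : Type*} [Fintype A] (a b x y : A) :
    (topTwo a b).lt x y ↔ rkTT a b x < rkTT a b y := Iff.rfl

lemma rkTT_le {A : Type*} [Fintype A] (a b x : A) (hx : x ≠ a) :
    rkTT a b x ≤ Fintype.card A := by
  have := (Fintype.equivFin A x).isLt
  unfold rkTT; split_ifs with h1 h2
  · exact absurd h1 hx
  · omega
  · omega

lemma topTwo_top {A : Type*} [Fintype A] (a b x : A) (hx : x ≠ a) :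
    (topTwo a b).lt x a := by
  rw [topTwo_lt]
  have h1 := rkTT_le a b x hx
  have h2 : rkTT a b a = Fintype.card A + 1 := by unfold rkTT; simp
  omega

lemma topTwo_second {A : Type*} [Fintype A] (a b x : A) (hab : b ≠ a) (hx : x ≠ a)
    (hx' : x ≠ b) : (topTwo a b).lt x b := by
  rw [topTwo_lt]
  have h1 : rkTT a b x = (Fintype.equivFin A x : ℕ) := by unfold rkTT; simp [hx, hx']
  have h2 : rkTT a b b = Fintype.card A := by unfold rkTT; simp [hab]
  have := (Fintype.equivFin A x).isLt
  omega

theorem image_avoids_ai_or_aj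
    {A : Type*} [Fintype A] (hA : 3 ≤ Fintype.card A) {N : ℕ} (hN : 1 ≤ N)
    (f : (Fin N → LinearOrder A) → A)
    (hmono : Monotonic f) (hunan : Unanimous f)
    (ai aj : A) (hij : ai ≠ aj) (σ : Fin N → Bool) :
    (∀ p : Fin N → LinearOrder A,
        (∀ l : Fin N, if σ l then (p l).lt aj ai else (p l).lt ai aj) → f p ≠ ai) ∨
    (∀ p : Fin N → LinearOrder A,
        (∀ l : Fin N, if σ l then (p l).lt aj ai else (p l).lt ai aj) → f p ≠ aj) := by
  by_contra h
  push_neg at h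
  obtain ⟨⟨p, hp, hpa⟩, ⟨q, hq, hqa⟩⟩ := h
  -- common profile: ai top / aj second for σ-agents, aj top / ai second otherwise
  set r : Fin N → LinearOrder A := fun l => if σ l then topTwo ai aj else topTwo aj ai with hr
  have hra : f r = ai := by
    refine hmono p r ai hpa ?_
    intro l b hb
    have hbne : b ≠ ai := by
      intro hEq; rw [hEq] at hb
      exact @lt_irrefl A (p l).toPreorder ai hb
    by_cases hσ : σ l
    · have : r l = topTwo ai aj := by simp [hr, hσ]
      rw [this]
      exact topTwo_top ai aj b hbne
    · have hpl : (p l).lt ai aj := by have := hp l; simpa [hσ] using this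
      have hbnj : b ≠ aj := by
        intro hEq; rw [hEq] at hb
        exact @lt_asymm A (p l).toPreorder _ _ hb hpl
      have : r l = topTwo aj ai := by simp [hr, hσ]
      rw [this]
      exact topTwo_second aj ai b hij hbnj hbne
  have hrb : f r = aj := by
    refine hmono q r aj hqa ?_
    intro l b hb
    have hbne : b ≠ aj := by
      intro hEq; rw [hEq] at hb
      exact @lt_irrefl A (q l).toPreorder aj hb
    by_cases hσ : σ l
    · have hql : (q l).lt aj ai := by have := hq l; simpa [hσ] using this
      have hbni : b ≠ ai := by
        intro hEq; rw [hEq] at hb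
        exact @lt_asymm A (q l).toPreorder _ _ hb hql
      have : r l = topTwo ai aj := by simp [hr, hσ]
      rw [this]
      exact topTwo_second ai aj b (Ne.symm hij) hbni hbne
    · have : r l = topTwo aj ai := by simp [hr, hσ]
      rw [this]
      exact topTwo_top aj ai b hbne
  exact hij (hra.symm.trans hrb)
end

section
/- For alternatives a_i ≠ a_j, if f is monotonic and two profiles agree in that every agent ranks a_i relative to a_j the same way, every agent ranks a_i and a_j above all other alternatives in both profiles, and f outputs a_i at the first profile, then f does not output a_j at the second profile. -/
theorem monotone_agreement_top_two
    {A : Type*} [Fintype A] {N : ℕ} (hN : 1 ≤ N)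
    (f : (Fin N → LinearOrder A) → A)
    (hmono : Monotonic f)
    (ai aj : A) (hij : ai ≠ aj)
    (p q : Fin N → LinearOrder A)
    (hagree : ∀ l : Fin N, (p l).lt aj ai ↔ (q l).lt aj ai)
    (htopp : ∀ (l : Fin N) (b : A), b ≠ ai → b ≠ aj → (p l).lt b ai ∧ (p l).lt b aj)
    (htopq : ∀ (l : Fin N) (b : A), b ≠ ai → b ≠ aj → (q l).lt b ai ∧ (q l).lt b aj)
    (hfp : f p = ai) :
    f q ≠ aj := by
  have hq : f q = ai := by
    apply hmono p q ai hfp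
    intro l b hb
    by_cases hb1 : b = aj
    · subst hb1; exact (hagree l).1 hb
    · have hb2 : b ≠ ai := by
        rintro rfl
        exact absurd hb (@lt_irrefl A (p l).toPartialOrder.toPreorder b)
      exact (htopq l b hb2 hb1).1
  rw [hq]; exact hij
end

section
/- Let V = {(x₁,…,x_n) ∈ ℝⁿ : Σ xᵢ = 0}^N, and for 1 ≤ i < j ≤ n and σ ∈ {+,−}^N let K_{ij}^σ = {(x̄¹,…,x̄^N) ∈ V : for all l, x̄ˡᵢ > x̄ˡⱼ if σ_l = + and x̄ˡᵢ < x̄ˡⱼ if σ_l = −}. Then a finite family of pairs (i,j,σ) has nonempty intersection of the K_{ij}^σ if and only if the corresponding family of preference-profile sets U_{ij}^σ has nonempty intersection, where U_{ij}^σ is the set of profiles of linear orders on {a₁,…,a_n} in which agent l ranks a_i above a_j iff σ_l = +. -/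
/-- The nerve of the cover by the open cones `K_{ij}^σ` in the sum-zero utility space
coincides with the nerve of the cover of preference profiles by the sets `U_{ij}^σ`:
a finite family of indices `(i, j, σ)` (with `i < j`) has nonempty intersection of the
`K`-sets iff it has nonempty intersection of the `U`-sets. -/
theorem nerve_utilities_eq_nerve_profiles
    (n N : ℕ) (hn : 2 ≤ n) (hN : 1 ≤ N)
    (S : Finset (Fin n × Fin n × (Fin N → Bool)))
    (hS : ∀ e ∈ S, e.1 < e.2.1) :
    (∃ x : Fin N → Fin n → ℝ, (∀ l, (∑ i, x l i) = 0) ∧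
        ∀ e ∈ S, ∀ l : Fin N,
          if e.2.2 l then x l e.2.1 < x l e.1 else x l e.1 < x l e.2.1) ↔
    (∃ p : Fin N → LinearOrder (Fin n),
        ∀ e ∈ S, ∀ l : Fin N,
          if e.2.2 l then (p l).lt e.2.1 e.1 else (p l).lt e.1 e.2.1) := by
  constructor
  · rintro ⟨x, hx0, hx⟩
    have hinj : ∀ l : Fin N, Function.Injective (fun i : Fin n => toLex (x l i, i)) := by
      intro l i j h
      simpa using congrArg (fun y : Lex (ℝ × Fin n) => (ofLex y).2) h
    refine ⟨fun l => LinearOrder.lift' _ (hinj l), ?_⟩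
    intro e he l
    have key : ∀ a b : Fin n, x l a < x l b →
        (LinearOrder.lift' _ (hinj l)).lt a b := by
      intro a b hab
      show toLex (x l a, a) < toLex (x l b, b)
      exact Prod.Lex.lt_iff.mpr (Or.inl hab)
    have h := hx e he l
    by_cases hb : e.2.2 l
    · simp only [hb, if_true] at h ⊢
      exact key _ _ h
    · simp only [hb, if_false] at h ⊢
      exact key _ _ h
  · rintro ⟨p, hp⟩
    classical
    set r : Fin N → Fin n → ℕ :=
      fun l i => (Finset.univ.filter (fun j => (p l).lt j i)).card with hr
    refine ⟨fun l i => (r l i : ℝ) - (∑ j, (r l j : ℝ)) / n, ?_, ?_⟩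
    · intro l
      have hn0 : (n : ℝ) ≠ 0 := by positivity
      rw [Finset.sum_sub_distrib, Finset.sum_const, Finset.card_univ, Fintype.card_fin,
        nsmul_eq_mul, mul_div_cancel₀ _ hn0, sub_self]
    · have key : ∀ l (a b : Fin n), (p l).lt a b →
          (r l a : ℝ) - (∑ j, (r l j : ℝ)) / n < (r l b : ℝ) - (∑ j, (r l j : ℝ)) / n := by
        intro l a b hab
        have hcard : r l a < r l b := by
          apply Finset.card_lt_card
          constructor
          · intro j hj
            simp only [hr, Finset.mem_filter, Finset.mem_univ, true_and] at hj ⊢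
            exact @lt_trans _ (p l).toPartialOrder.toPreorder _ _ _ hj hab
          · intro hsub
            have ha : a ∈ Finset.univ.filter (fun j => (p l).lt j b) := by
              simp [hab]
            have h2 := hsub ha
            simp only [hr, Finset.mem_filter, Finset.mem_univ, true_and] at h2
            exact @lt_irrefl _ (p l).toPartialOrder.toPreorder a h2
        have hlt : (r l a : ℝ) < (r l b : ℝ) := by exact_mod_cast hcard
        linarith
      intro e he l
      have h := hp e he l
      by_cases hb : e.2.2 l
      · simp only [hb, if_true] at h ⊢
        exact key l _ _ h
      · simp only [hb, if_false] at h ⊢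
        exact key l _ _ h
end

section
/- Edge-coloring bound: for any coloring λ of the edges of the complete graph K_n with N colors, letting Γ_k denote the spanning subgraph of edges colored k, the sum over colors k of the first Betti numbers h₁(Γ_k) = |E(Γ_k)| − n + c(Γ_k) (where c is the number of connected components) is at most h₁(K_n) = C(n,2) − n + 1, with equality only if some single color class gives this maximum. -/
/-- The spanning subgraph of the complete graph on `Fin n` consisting of the edges
colored `k` by the edge-coloring `lam` (only the values `lam i j` for `i < j` matter). -/
def colorGraph (n N : ℕ) (lam : Fin n → Fin n → Fin N) (k : Fin N) : SimpleGraph (Fin n) :=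
  SimpleGraph.fromRel (fun i j => i < j ∧ lam i j = k)

/-- The cycle rank (first Betti number) `h₁(Γ_k) = |E(Γ_k)| - n + c(Γ_k)` of the
subgraph of edges colored `k`. -/
noncomputable def betti1 (n N : ℕ) (lam : Fin n → Fin n → Fin N) (k : Fin N) : ℤ :=
  (Nat.card (colorGraph n N lam k).edgeSet : ℤ) - (n : ℤ)
    + (Nat.card (colorGraph n N lam k).ConnectedComponent : ℤ)

open Finset SimpleGraph

section Aux

variable (n N : ℕ) (lam : Fin n → Fin n → Fin N)

/-- The symmetric color function on ordered pairs. -/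
def eCol (v u : Fin n) : Fin N := if v < u then lam v u else lam u v

lemma eCol_symm (v u : Fin n) : eCol n N lam v u = eCol n N lam u v := by
  unfold eCol
  rcases lt_trichotomy v u with h | h | h
  · rw [if_pos h, if_neg (asymm h)]
  · subst h; rfl
  · rw [if_neg (asymm h), if_pos h]

lemma adj_iff {k : Fin N} {v u : Fin n} :
    (colorGraph n N lam k).Adj v u ↔ v ≠ u ∧ eCol n N lam v u = k := by
  unfold colorGraph eCol
  rw [SimpleGraph.fromRel_adj]
  constructor
  · rintro ⟨hne, h | h⟩
    · exact ⟨hne, by rw [if_pos h.1]; exact h.2⟩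
    · exact ⟨hne, by rw [if_neg (asymm h.1)]; exact h.2⟩
  · rintro ⟨hne, h⟩
    refine ⟨hne, ?_⟩
    rcases lt_or_gt_of_ne hne with hlt | hgt
    · rw [if_pos hlt] at h; exact Or.inl ⟨hlt, h⟩
    · rw [if_neg (asymm hgt)] at h; exact Or.inr ⟨hgt, h⟩

instance (k : Fin N) : DecidableRel (colorGraph n N lam k).Adj := fun a b =>
  decidable_of_iff' _ (SimpleGraph.fromRel_adj _ a b)

/-- The `k`-colored neighbors of `v`. -/
def nbr (k : Fin N) (v : Fin n) : Finset (Fin n) :=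
  univ.filter (fun u => (colorGraph n N lam k).Adj v u)

lemma self_notMem_nbr (k : Fin N) (v : Fin n) : v ∉ nbr n N lam k v := by
  simp [nbr]

lemma sum_nbr_card (v : Fin n) : ∑ k, (nbr n N lam k v).card = n - 1 := by
  have h0 : (univ.filter (fun u => u ≠ v)).card = n - 1 := by
    rw [Finset.filter_ne', Finset.card_erase_of_mem (mem_univ v), card_univ, Fintype.card_fin]
  rw [← h0, Finset.card_eq_sum_card_fiberwise
    (f := fun u => eCol n N lam v u) (t := univ) (fun _ _ => mem_univ _)]
  refine Finset.sum_congr rfl fun k _ => ?_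
  congr 1
  ext u
  simp only [nbr, Finset.mem_filter, Finset.mem_univ, true_and, adj_iff, ne_comm, and_assoc]

/-- Key counting bound: if `v ∉ S` and every element of `S` is reachable from `v`,
then the number of connected components plus `|S|` is at most `n`. -/
lemma card_comp_add_le (k : Fin N) (S : Finset (Fin n)) (v : Fin n) (hv : v ∉ S)
    (hS : ∀ u ∈ S, (colorGraph n N lam k).Reachable v u) :
    Nat.card (colorGraph n N lam k).ConnectedComponent + S.card ≤ n := by
  classical
  set G := colorGraph n N lam k
  have hsurj : Function.Surjective
      (fun u : {u : Fin n // u ∉ S} => G.connectedComponentMk u) := by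
    intro c
    induction c using SimpleGraph.ConnectedComponent.ind with
    | _ w =>
      by_cases hw : w ∈ S
      · exact ⟨⟨v, hv⟩, SimpleGraph.ConnectedComponent.sound (hS w hw)⟩
      · exact ⟨⟨w, hw⟩, rfl⟩
  have h1 : Nat.card G.ConnectedComponent ≤ Nat.card {u : Fin n // u ∉ S} :=
    Nat.card_le_card_of_surjective _ hsurj
  have h2 : Nat.card {u : Fin n // u ∉ S} = n - S.card := by
    rw [Nat.card_eq_fintype_card, Fintype.card_subtype]
    rw [Finset.filter_not, Finset.card_sdiff_of_subset (Finset.filter_subset _ _)]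
    congr 1
    · rw [card_univ, Fintype.card_fin]
    · congr 1; ext u; simp
  have h3 : S.card ≤ n := by
    have := Finset.card_le_univ S
    simpa using this
  omega

lemma comp_add_nbr_le (k : Fin N) (v : Fin n) :
    Nat.card (colorGraph n N lam k).ConnectedComponent + (nbr n N lam k v).card ≤ n := by
  refine card_comp_add_le n N lam k _ v (self_notMem_nbr n N lam k v) fun u hu => ?_
  exact ((Finset.mem_filter.mp hu).2).reachable

/-- Color of an edge, as a function on `Sym2`. -/
def eColS : Sym2 (Fin n) → Fin N :=
  Sym2.lift ⟨eCol n N lam, eCol_symm n N lam⟩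

lemma edgeFinset_eq (k : Fin N) :
    (colorGraph n N lam k).edgeFinset =
      ((⊤ : SimpleGraph (Fin n)).edgeFinset).filter (fun e => eColS n N lam e = k) := by
  ext e
  induction e using Sym2.ind with
  | _ u w =>
    simp [SimpleGraph.mem_edgeFinset, SimpleGraph.mem_edgeSet, adj_iff, eColS,
      SimpleGraph.top_adj]

lemma sum_edge_card :
    ∑ k, (colorGraph n N lam k).edgeFinset.card = n.choose 2 := by
  classical
  have h := Finset.card_eq_sum_card_fiberwise
    (f := eColS n N lam) (s := (⊤ : SimpleGraph (Fin n)).edgeFinset) (t := univ)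
    (fun _ _ => mem_univ _)
  rw [SimpleGraph.card_edgeFinset_top_eq_card_choose_two, Fintype.card_fin] at h
  rw [h]
  exact Finset.sum_congr rfl fun k _ => by rw [edgeFinset_eq]

lemma betti1_eq (k : Fin N) :
    betti1 n N lam k = ((colorGraph n N lam k).edgeFinset.card : ℤ) - (n : ℤ)
      + (Nat.card (colorGraph n N lam k).ConnectedComponent : ℤ) := by
  rw [betti1, SimpleGraph.edgeFinset_card, Nat.card_eq_fintype_card]

end Aux

/-- For any `N`-coloring of the edges of the complete graph `K_n`, the sum over colors
of the cycle ranks of the color classes is at most `h₁(K_n) = C(n,2) - n + 1`, with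
equality only if some single color class attains this maximum. -/
theorem sum_betti_le (n N : ℕ) (hn : 3 ≤ n) (hN : 1 ≤ N)
    (lam : Fin n → Fin n → Fin N) :
    (∑ k : Fin N, betti1 n N lam k) ≤ (n.choose 2 : ℤ) - (n : ℤ) + 1 ∧
    ((∑ k : Fin N, betti1 n N lam k) = (n.choose 2 : ℤ) - (n : ℤ) + 1 →
      ∃ k : Fin N, betti1 n N lam k = (n.choose 2 : ℤ) - (n : ℤ) + 1) := by
  classical
  haveI : NeZero n := ⟨by omega⟩
  set c : Fin N → ℕ := fun k => Nat.card (colorGraph n N lam k).ConnectedComponent with hc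
  set d : Fin N → Fin n → ℕ := fun k v => (nbr n N lam k v).card with hd
  have hbnd : ∀ (k : Fin N) (v : Fin n), c k + d k v ≤ n := fun k v =>
    comp_add_nbr_le n N lam k v
  have hdsum : ∀ v : Fin n, ∑ k, d k v = n - 1 := fun v => sum_nbr_card n N lam v
  -- the sum of the Betti numbers, rewritten
  have hsum : ∑ k : Fin N, betti1 n N lam k
      = (n.choose 2 : ℤ) - (N : ℤ) * n + ∑ k, (c k : ℤ) := by
    rw [Finset.sum_congr rfl fun k _ => betti1_eq n N lam k]
    rw [Finset.sum_add_distrib, Finset.sum_sub_distrib, Finset.sum_const, card_univ,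
      Fintype.card_fin]
    have : ∑ k, ((colorGraph n N lam k).edgeFinset.card : ℤ) = (n.choose 2 : ℤ) := by
      rw [← Nat.cast_sum, sum_edge_card]
    rw [this]
    push_cast
    ring
  have hn1 : ((n - 1 : ℕ) : ℤ) = (n : ℤ) - 1 := by
    rw [Nat.cast_sub (by omega)]; norm_num
  have hNsum : ∀ v : Fin n, ∑ k, c k + (n - 1) = ∑ k, (c k + d k v) := by
    intro v
    rw [Finset.sum_add_distrib, hdsum v]
  have hcsum_le : ∑ k, (c k : ℤ) ≤ (N : ℤ) * n - ((n : ℤ) - 1) := by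
    have h1 : ∑ k, (c k + d k 0) ≤ N * n := by
      calc ∑ k, (c k + d k 0) ≤ ∑ _k : Fin N, n :=
            Finset.sum_le_sum fun k _ => hbnd k 0
        _ = N * n := by rw [Finset.sum_const, card_univ, Fintype.card_fin, smul_eq_mul]
    rw [← hNsum 0] at h1
    have h2 : ((∑ k, c k + (n - 1) : ℕ) : ℤ) ≤ ((N * n : ℕ) : ℤ) := Nat.cast_le.mpr h1
    rw [Nat.cast_add, Nat.cast_sum, hn1, Nat.cast_mul] at h2
    linarith
  constructor
  · rw [hsum]
    have : ((n : ℤ) - 1) = (n : ℤ) - 1 := rfl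
    linarith
  · intro heq
    rw [hsum] at heq
    have hcsum : ∑ k, (c k : ℤ) = (N : ℤ) * n - ((n : ℤ) - 1) := by linarith
    -- per-vertex, per-color equality
    have hNn : ∀ v : Fin n, ∑ k, (c k + d k v) = N * n := by
      intro v
      have hz : ((∑ k, (c k + d k v) : ℕ) : ℤ) = ((N * n : ℕ) : ℤ) := by
        rw [← hNsum v, Nat.cast_add, Nat.cast_sum, hn1, Nat.cast_mul]
        linarith
      exact_mod_cast hz
    have heach : ∀ (v : Fin n) (k : Fin N), c k + d k v = n := by
      intro v k0
      by_contra hne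
      have hlt : c k0 + d k0 v < n := lt_of_le_of_ne (hbnd k0 v) hne
      have : ∑ k, (c k + d k v) < ∑ _k : Fin N, n :=
        Finset.sum_lt_sum (fun k _ => hbnd k v) ⟨k0, mem_univ _, hlt⟩
      rw [hNn v, Finset.sum_const, card_univ, Fintype.card_fin, smul_eq_mul] at this
      omega
    -- the color of the edge {0,1}
    set a : Fin N := eCol n N lam 0 1 with ha
    have h01 : (0 : Fin n) ≠ 1 := by
      intro h
      have hv := congrArg Fin.val h
      have h0 : ((0 : Fin n) : ℕ) = 0 % n := rfl
      have h1v : ((1 : Fin n) : ℕ) = 1 % n := rfl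
      rw [h0, h1v, Nat.zero_mod, Nat.mod_eq_of_lt (show 1 < n by omega)] at hv
      exact absurd hv (by omega)
    have hadj01 : (colorGraph n N lam a).Adj 0 1 := (adj_iff n N lam).mpr ⟨h01, ha.symm⟩
    have hd0 : 1 ≤ d a 0 :=
      Finset.card_pos.mpr ⟨1, Finset.mem_filter.mpr ⟨mem_univ _, hadj01⟩⟩
    have hdconst : ∀ v : Fin n, d a v = d a 0 := by
      intro v
      have h1 := heach v a
      have h2 := heach 0 a
      omega
    -- reachability in color a implies adjacency
    have cliq : ∀ u w : Fin n, (colorGraph n N lam a).Reachable u w →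
        u = w ∨ (colorGraph n N lam a).Adj u w := by
      intro u w hr
      by_contra hcon
      push_neg at hcon
      obtain ⟨hne, hnadj⟩ := hcon
      have hwnbr : w ∉ nbr n N lam a u := by
        simp only [nbr, Finset.mem_filter, Finset.mem_univ, true_and]
        exact hnadj
      have hu : u ∉ insert w (nbr n N lam a u) := by
        simp only [Finset.mem_insert]
        push_neg
        exact ⟨hne, self_notMem_nbr n N lam a u⟩
      have hreach : ∀ x ∈ insert w (nbr n N lam a u),
          (colorGraph n N lam a).Reachable u x := by
        intro x hx
        rcases Finset.mem_insert.mp hx with h | h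
        · subst h; exact hr
        · exact ((Finset.mem_filter.mp h).2).reachable
      have hb := card_comp_add_le n N lam a _ u hu hreach
      rw [Finset.card_insert_of_notMem hwnbr] at hb
      have hbX : c a + (d a u + 1) ≤ n := hb
      have := heach u a
      omega
    -- count fibers of the component map
    haveI : Fintype (colorGraph n N lam a).ConnectedComponent := Fintype.ofFinite _
    have hfib : ∀ x : (colorGraph n N lam a).ConnectedComponent,
        (univ.filter (fun v => (colorGraph n N lam a).connectedComponentMk v = x)).card
          = d a 0 + 1 := by
      intro x
      induction x using SimpleGraph.ConnectedComponent.ind with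
      | _ v =>
        have hset : univ.filter
            (fun u => (colorGraph n N lam a).connectedComponentMk u
              = (colorGraph n N lam a).connectedComponentMk v)
            = insert v (nbr n N lam a v) := by
          ext u
          simp only [Finset.mem_filter, Finset.mem_univ, true_and, Finset.mem_insert, nbr]
          rw [SimpleGraph.ConnectedComponent.eq]
          constructor
          · intro h
            rcases cliq v u h.symm with h' | h'
            · exact Or.inl h'.symm
            · exact Or.inr h'
          · rintro (h | h)
            · subst h; rfl
            · exact (h.reachable).symm
        rw [hset, Finset.card_insert_of_notMem (self_notMem_nbr n N lam a v)]
        rw [show (nbr n N lam a v).card = d a v from rfl, hdconst v]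
    have hcount : n = c a * (d a 0 + 1) := by
      have h := Finset.card_eq_sum_card_fiberwise
        (f := (colorGraph n N lam a).connectedComponentMk) (s := univ) (t := univ)
        (fun _ _ => mem_univ _)
      rw [Finset.sum_congr rfl fun x _ => hfib x, Finset.sum_const, smul_eq_mul,
        card_univ, card_univ, Fintype.card_fin] at h
      have hce : c a = Fintype.card (colorGraph n N lam a).ConnectedComponent :=
        Nat.card_eq_fintype_card
      rw [hce]
      exact h
    -- conclude c a = 1
    have hca1 : c a = 1 := by
      have h2 := heach 0 a
      have h4 := hcount
      rw [mul_add_one] at h4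
      have h5 : c a * d a 0 + c a = c a + d a 0 := by rw [← h4]; exact h2.symm
      rw [Nat.add_comm (c a * d a 0) (c a)] at h5
      have h3 : c a * d a 0 = d a 0 := Nat.add_left_cancel h5
      have h3x : c a * d a 0 = 1 * d a 0 := by rw [one_mul]; exact h3
      exact Nat.eq_of_mul_eq_mul_right (show 0 < d a 0 by omega) h3x
    -- color a is the complete graph
    have hca2 : Nat.card (colorGraph n N lam a).ConnectedComponent = 1 := hca1
    haveI hsub : Subsingleton (colorGraph n N lam a).ConnectedComponent :=
      (Nat.card_eq_one_iff_unique.mp hca2).1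
    have htop : colorGraph n N lam a = ⊤ := by
      ext u w
      rw [SimpleGraph.top_adj]
      constructor
      · exact fun h => h.ne
      · intro hne
        have hr : (colorGraph n N lam a).Reachable u w := by
          rw [← SimpleGraph.ConnectedComponent.eq]
          exact Subsingleton.elim _ _
        rcases cliq u w hr with h | h
        · exact absurd h hne
        · exact h
    refine ⟨a, ?_⟩
    have hE : Nat.card (colorGraph n N lam a).edgeSet = n.choose 2 := by
      rw [htop, Nat.card_eq_fintype_card, ← SimpleGraph.edgeFinset_card,
        SimpleGraph.card_edgeFinset_top_eq_card_choose_two, Fintype.card_fin]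
    simp only [betti1]
    rw [hE, hca2]
    push_cast
    ring
end
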